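/- Let ℓ be a positive integer and let (a₁,…,a_ℓ) ∈ {1,2}^ℓ. Write the continued fraction [a₁,…,a_ℓ] = p/q with p, q coprime positive integers. Then there exists a tree T and a positive integer g such that g is a power of 2, g ≤ q, and i(T) = g·(p + q). -/

import Mathlib

/-- The number of independent sets of a simple graph `G`
(including the empty set). -/
noncomputable def numIndep {V : Type*} (G : SimpleGraph V) : ℕ :=
  Nat.card {s : Set V // ∀ x ∈ s, ∀ y ∈ s, ¬ G.Adj x y}

/-- The continued fraction `[a₁,…,a_ℓ] = 1/(a₁+1/(a₂+⋯+1/a_ℓ))`. -/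
def contFrac : List ℕ → ℚ
  | [] => 0
  | a :: rest => 1 / ((a : ℚ) + contFrac rest)

/-!
For a tree `T` rooted at `r` put `A = i(T)` and `B = i(T - r)`. Attaching a new leaf `v` at `r`
gives a tree `T'` with `i(T') = A + B`, `i(T' - v) = A` and `i(T' - r) = 2B`. Suppose
`(A, B) = g (p + q, q)` where `[a₂, …, a_ℓ] = p/q`; then `[a₁, …, a_ℓ] = p'/q'` with `p' = q` and
`q' = a₁q + p`. For `a₁ = 1` one leaf, taken as the new root, gives `g (p' + q', q')`; for
`a₁ = 2` three leaves give `2g (p' + q', q')`, and `2g ≤ 2q ≤ q'`. The induction starts from a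
single vertex, which gives `(2, 1)` for `[1] = 1/1`.
-/

namespace Set

noncomputable def finSuccEquiv (n : ℕ) : Set (Fin n) ⊕ Set (Fin n) ≃ Set (Fin (n + 1)) where
  toFun := Sum.elim (Fin.castSucc '' ·) (fun s ↦ insert (Fin.last n) (Fin.castSucc '' s))
  invFun s := open Classical in
    if Fin.last n ∈ s then .inr (Fin.castSucc ⁻¹' s) else .inl (Fin.castSucc ⁻¹' s)
  left_inv := by
    rintro (s | s)
    · simp [(Fin.castSucc_injective n).preimage_image]
    · have : Fin.castSucc ⁻¹' insert (Fin.last n) (Fin.castSucc '' s) = s := by ext; simp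
      simp [this]
  right_inv s := by
    by_cases h : Fin.last n ∈ s <;> ext j <;> cases j using Fin.lastCases <;> simp [h]

theorem natCard_subtype_fin_succ {n : ℕ} (P : Set (Fin (n + 1)) → Prop) :
    Nat.card {s // P s} = Nat.card {s : Set (Fin n) // P (Fin.castSucc '' s)} +
      Nat.card {s : Set (Fin n) // P (insert (Fin.last n) (Fin.castSucc '' s))} := by
  rw [← Nat.card_sum]
  exact Nat.card_congr (((finSuccEquiv n).symm.subtypeEquiv fun _ ↦ by simp).trans
    (Equiv.subtypeSum (p := fun x ↦ P (finSuccEquiv n x))))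

end Set

namespace SimpleGraph

noncomputable def numIndepAvoiding {V : Type*} (G : SimpleGraph V) (v : V) : ℕ :=
  Nat.card {s : Set V // (∀ x ∈ s, ∀ y ∈ s, ¬ G.Adj x y) ∧ v ∉ s}

variable {n : ℕ}

def addLeaf (G : SimpleGraph (Fin n)) (u : Fin n) : SimpleGraph (Fin (n + 1)) :=
  G.map Fin.castSuccEmb ⊔ edge (Fin.last n) u.castSucc

variable {G : SimpleGraph (Fin n)} {u : Fin n}

@[simp] theorem addLeaf_adj_castSucc {i j : Fin n} :
    (G.addLeaf u).Adj i.castSucc j.castSucc ↔ G.Adj i j := by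
  simp [addLeaf, edge_adj, map_adj, -Fin.coe_castSuccEmb, Fin.castSuccEmb_apply]

@[simp] theorem addLeaf_adj_last_left {j : Fin n} :
    (G.addLeaf u).Adj (Fin.last n) j.castSucc ↔ j = u := by
  simp [addLeaf, edge_adj, map_adj, -Fin.coe_castSuccEmb, Fin.castSuccEmb_apply,
    (Fin.castSucc_ne_last _).symm]

@[simp] theorem addLeaf_adj_last_right {j : Fin n} :
    (G.addLeaf u).Adj j.castSucc (Fin.last n) ↔ j = u := by
  rw [adj_comm, addLeaf_adj_last_left]

theorem Connected.addLeaf (hG : G.Connected) (u : Fin n) : (G.addLeaf u).Connected := by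
  let φ : G →g G.addLeaf u := (Hom.ofLE le_sup_left).comp (Embedding.map Fin.castSuccEmb G).toHom
  have reach (v : Fin (n + 1)) : (G.addLeaf u).Reachable v u.castSucc := by
    induction v using Fin.lastCases with
    | last => exact Adj.reachable (by simp)
    | cast i => exact (hG.preconnected i u).map φ
  exact ⟨fun v w ↦ (reach v).trans (reach w).symm⟩

theorem natCard_edgeSet_addLeaf [Finite G.edgeSet] :
    Nat.card (G.addLeaf u).edgeSet = Nat.card G.edgeSet + 1 := by
  have hnew : s(Fin.last n, u.castSucc) ∉ Fin.castSuccEmb.sym2Map '' G.edgeSet := by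
    rintro ⟨e, -, he⟩
    obtain ⟨i, -, hi⟩ := Sym2.mem_map.1 (he ▸ Sym2.mem_mk_left _ _)
    exact Fin.castSucc_ne_last i hi
  rw [addLeaf, edgeSet_sup, edgeSet_map, edgeSet_edge_of_ne (Fin.castSucc_ne_last u).symm,
    Set.union_singleton, Nat.card_coe_set_eq, Set.ncard_insert_of_notMem hnew,
    Set.ncard_image_of_injective _ (Function.Embedding.injective _), Nat.card_coe_set_eq]

theorem IsTree.addLeaf (hG : G.IsTree) (u : Fin n) : (G.addLeaf u).IsTree := by
  rw [isTree_iff_connected_and_card] at hG ⊢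
  refine ⟨hG.1.addLeaf u, ?_⟩
  rw [natCard_edgeSet_addLeaf, hG.2, Nat.card_eq_fintype_card, Nat.card_eq_fintype_card]
  simp

theorem addLeaf_indep_image_castSucc {s : Set (Fin n)} :
    (∀ x ∈ Fin.castSucc '' s, ∀ y ∈ Fin.castSucc '' s, ¬ (G.addLeaf u).Adj x y) ↔
      ∀ x ∈ s, ∀ y ∈ s, ¬ G.Adj x y := by
  simp only [Set.forall_mem_image, addLeaf_adj_castSucc]

theorem addLeaf_indep_insert_last {s : Set (Fin n)} :
    (∀ x ∈ insert (Fin.last n) (Fin.castSucc '' s),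
        ∀ y ∈ insert (Fin.last n) (Fin.castSucc '' s), ¬ (G.addLeaf u).Adj x y) ↔
      (∀ x ∈ s, ∀ y ∈ s, ¬ G.Adj x y) ∧ u ∉ s := by
  simp only [Set.forall_mem_insert, Set.forall_mem_image, addLeaf_adj_castSucc,
    addLeaf_adj_last_left, addLeaf_adj_last_right, SimpleGraph.irrefl, not_false_eq_true, true_and]
  grind

theorem numIndep_addLeaf : numIndep (G.addLeaf u) = numIndep G + G.numIndepAvoiding u := by
  rw [numIndep, Set.natCard_subtype_fin_succ]
  simp only [addLeaf_indep_image_castSucc, addLeaf_indep_insert_last]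
  rfl

theorem numIndepAvoiding_addLeaf_castSucc :
    (G.addLeaf u).numIndepAvoiding u.castSucc = 2 * G.numIndepAvoiding u := by
  rw [numIndepAvoiding, Set.natCard_subtype_fin_succ, two_mul]
  simp only [addLeaf_indep_image_castSucc, addLeaf_indep_insert_last]
  simp only [Set.mem_insert_iff, (Fin.castSucc_injective n).mem_set_image, Fin.castSucc_ne_last,
    false_or, and_self_right]
  rfl

theorem numIndepAvoiding_addLeaf_last :
    (G.addLeaf u).numIndepAvoiding (Fin.last n) = numIndep G := by
  rw [numIndepAvoiding, Set.natCard_subtype_fin_succ]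
  simp only [addLeaf_indep_image_castSucc, addLeaf_indep_insert_last]
  simp [numIndep]

end SimpleGraph

theorem Rat.natCast_add_num (a : ℕ) (x : ℚ) : ((a : ℚ) + x).num = a * x.den + x.num := by
  have h : (((a : ℚ) + x).num : ℚ) = a * x.den + x.num := by
    rw [← Rat.mul_den_eq_num, Rat.natCast_add_den, add_mul, Rat.mul_den_eq_num]
  exact_mod_cast h

theorem contFrac_nonneg (L : List ℕ) : 0 ≤ contFrac L := by
  induction L with
  | nil => exact le_rfl
  | cons a L ih => rw [contFrac]; positivity

theorem natCast_add_contFrac_num_pos {a : ℕ} (ha : a ≠ 0) (L : List ℕ) :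
    0 < ((a : ℚ) + contFrac L).num :=
  Rat.num_pos.2 (by have := contFrac_nonneg L; positivity)

theorem contFrac_cons_num {a : ℕ} (ha : a ≠ 0) (L : List ℕ) :
    (contFrac (a :: L)).num = (contFrac L).den := by
  rw [contFrac, one_div, Rat.num_inv, Int.sign_eq_one_of_pos (natCast_add_contFrac_num_pos ha L),
    Rat.natCast_add_den, one_mul]

theorem contFrac_cons_den {a : ℕ} (ha : a ≠ 0) (L : List ℕ) :
    (contFrac (a :: L)).den = a * (contFrac L).den + (contFrac L).num.toNat := by
  rw [contFrac, one_div, Rat.den_inv, if_neg (natCast_add_contFrac_num_pos ha L).ne',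
    Rat.natCast_add_num]
  have := Rat.num_nonneg.2 (contFrac_nonneg L)
  omega

open SimpleGraph

def IsRealizable (A B : ℕ) : Prop :=
  ∃ (n : ℕ) (T : SimpleGraph (Fin (n + 1))) (r : Fin (n + 1)),
    T.IsTree ∧ numIndep T = A ∧ T.numIndepAvoiding r = B

theorem isRealizable_two_one : IsRealizable 2 1 := by
  refine ⟨0, ⊥, 0, IsTree.of_subsingleton (V := Fin 1), ?_, ?_⟩
  · rw [numIndep, Set.natCard_subtype_fin_succ]
    simp
  · rw [numIndepAvoiding, Set.natCard_subtype_fin_succ]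
    simp

namespace IsRealizable

variable {A B : ℕ}

theorem addLeaf (h : IsRealizable A B) : IsRealizable (A + B) (2 * B) := by
  obtain ⟨n, T, r, hT, hA, hB⟩ := h
  exact ⟨n + 1, T.addLeaf r, r.castSucc, hT.addLeaf r,
    by rw [numIndep_addLeaf, hA, hB], by rw [numIndepAvoiding_addLeaf_castSucc, hB]⟩

theorem addLeaf_reroot (h : IsRealizable A B) : IsRealizable (A + B) A := by
  obtain ⟨n, T, r, hT, hA, hB⟩ := h
  exact ⟨n + 1, T.addLeaf r, Fin.last _, hT.addLeaf r,
    by rw [numIndep_addLeaf, hA, hB], by rw [numIndepAvoiding_addLeaf_last, hA]⟩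

end IsRealizable

theorem exists_isRealizable_contFrac (L : List ℕ) (hL : L ≠ [])
    (h12 : ∀ a ∈ L, a = 1 ∨ a = 2) :
    ∃ j, 2 ^ j ≤ (contFrac L).den ∧
      IsRealizable (2 ^ j * ((contFrac L).num.toNat + (contFrac L).den))
        (2 ^ j * (contFrac L).den) := by
  induction L with
  | nil => exact absurd rfl hL
  | cons a L ih =>
    have ha : a = 1 ∨ a = 2 := h12 a List.mem_cons_self
    have ha0 : a ≠ 0 := by omega
    rw [contFrac_cons_num ha0, contFrac_cons_den ha0, Int.toNat_natCast]
    rcases eq_or_ne L [] with rfl | hL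
    · rcases ha with rfl | rfl
      · exact ⟨0, by simp [contFrac], by simpa [contFrac] using isRealizable_two_one⟩
      · exact ⟨0, by simp [contFrac],
          by simpa [contFrac] using isRealizable_two_one.addLeaf_reroot⟩
    obtain ⟨j, hj, hT⟩ := ih hL fun b hb ↦ h12 b (List.mem_cons_of_mem a hb)
    rcases ha with rfl | rfl
    · refine ⟨j, by linarith, ?_⟩
      convert hT.addLeaf_reroot using 1 <;> ring
    · refine ⟨j + 1, by rw [pow_succ]; linarith, ?_⟩
      -- `(A, B) ↦ (A + B, 2B) ↦ (A + 3B, A + B) ↦ (2A + 4B, 2A + 2B)`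
      convert hT.addLeaf.addLeaf_reroot.addLeaf using 1 <;> ring

/-- If `(a₁,…,a_ℓ) ∈ {1,2}^ℓ` (with `ℓ ≥ 1`) and `[a₁,…,a_ℓ] = p/q` in lowest
terms, then there is a tree `T` and a power of two `g ≤ q` with
`i(T) = g·(p + q)`. -/
theorem exists_tree_of_contFrac (L : List ℕ) (hL : L ≠ [])
    (h12 : ∀ a ∈ L, a = 1 ∨ a = 2) :
    ∃ (n : ℕ) (T : SimpleGraph (Fin n)) (g : ℕ),
      T.IsTree ∧ (∃ j : ℕ, g = 2 ^ j) ∧ g ≤ (contFrac L).den ∧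
      numIndep T = g * ((contFrac L).num.toNat + (contFrac L).den) := by
  obtain ⟨j, hj, n, T, -, hT, hA, -⟩ := exists_isRealizable_contFrac L hL h12
  exact ⟨n + 1, T, 2 ^ j, hT, ⟨j, rfl⟩, hj, hA⟩
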